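/- arXiv:1403.4755 — 4 statements merged into one kernel-verified Lean document; each statement's English description precedes it below -/
import Mathlib

section
/- Let ρ₀, ρ₁ be Borel probability measures on H with Ent_γ(ρ₀) < ∞ and Ent_γ(ρ₁) < ∞. Suppose Π ∈ C(ρ₀,ρ₁) is a weak limit point, as ε → 0, of couplings Π_ε ∈ C(ρ₀,ρ₁), where each Π_ε minimizes Π ↦ ∫ c_ε(x−y) dΠ over C(ρ₀,ρ₁) and satisfies, for every t ∈ (0,1), Ent_γ(ρ_t^ε) ≤ (1−t)Ent_γ(ρ₀) + t Ent_γ(ρ₁) − (t(1−t)/(2(1+ε)²))(W_ε(ρ₀,ρ₁) − ε)², where ρ_t^ε := ((1−t)P₁ + tP₂)_#Π_ε. Then for every t ∈ (0,1), the measure ρ_t := ((1−t)P₁ + tP₂)_#Π satisfies Ent_γ(ρ_t) ≤ (1−t)Ent_γ(ρ₀) + t Ent_γ(ρ₁) − (t(1−t)/2) W₁(ρ₀,ρ₁)²; in particular ρ_t has finite relative entropy, hence ρ_t ≪ γ. -/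
open MeasureTheory ProbabilityTheory Filter Metric Set
open scoped ENNReal NNReal

section Defs

variable {E : Type*} [MeasurableSpace E]

open scoped Classical in
/-- Relative entropy of `ρ` with respect to `m`: `∫ (dρ/dm) log(dρ/dm) dm`
when `ρ ≪ m` and the integrand is integrable, `+∞` otherwise. -/
noncomputable def Ent (m ρ : Measure E) : EReal :=
  if ρ ≪ m ∧ Integrable (llr ρ m) ρ then ((∫ x, llr ρ m x ∂ρ : ℝ) : EReal) else ⊤

end Defs

section Hilbert

variable {H : Type*} [NormedAddCommGroup H] [InnerProductSpace ℝ H]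
  [MeasurableSpace H] [BorelSpace H]

/-- A centered Gaussian measure: every continuous linear functional pushes the measure
forward to a centered Gaussian measure on `ℝ`. -/
def IsCenteredGaussian (γ : Measure H) : Prop :=
  IsProbabilityMeasure γ ∧
    ∀ ℓ : H →L[ℝ] ℝ, ∃ v : ℝ≥0, Measure.map ℓ γ = gaussianReal 0 v

/-- The covariance operator of `γ` has the representation `R x = ∑ i, c i ⟪x, e i⟫ e i` for an
orthonormal system `e` (expressed via `⟪R u, v⟫`), with eigenvalue decay `c (i+1) ≤ c i / i ^ α`
for some `α > 5/2`. -/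
def TiserCondition (γ : Measure H) : Prop :=
  ∃ (a : ℝ) (c : ℕ → ℝ) (e : ℕ → H), 5 / 2 < a ∧ Orthonormal ℝ e ∧
    (∀ i : ℕ, c (i + 1) ≤ c i / (i + 1 : ℝ) ^ a) ∧
    ∀ u v : H, ∫ x, (inner ℝ x u : ℝ) * (inner ℝ x v : ℝ) ∂γ
      = ∑' i, c i * (inner ℝ u (e i) : ℝ) * (inner ℝ v (e i) : ℝ)

/-- The set of couplings between `ρ₀` and `ρ₁`. -/
def Coupling (ρ₀ ρ₁ : Measure H) : Set (Measure (H × H)) :=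
  {π | Measure.map Prod.fst π = ρ₀ ∧ Measure.map Prod.snd π = ρ₁}

/-- The transport cost `∫ |x - y| dπ`. -/
noncomputable def cost1 (π : Measure (H × H)) : ℝ≥0∞ :=
  ∫⁻ p, ENNReal.ofReal ‖p.1 - p.2‖ ∂π

/-- The strictly convex cost `α(z) = √(1 + |z|²)`. -/
noncomputable def alphaCost (z : H) : ℝ := Real.sqrt (1 + ‖z‖ ^ 2)

/-- The gradient of `α`, `∇α(z) = z / √(1 + |z|²)`. -/
noncomputable def gradAlpha (z : H) : H := (Real.sqrt (1 + ‖z‖ ^ 2))⁻¹ • z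

/-- The secondary transport cost `∫ α(x - y) dπ`. -/
noncomputable def cost2 (π : Measure (H × H)) : ℝ≥0∞ :=
  ∫⁻ p, ENNReal.ofReal (alphaCost (p.1 - p.2)) ∂π

/-- The perturbed cost `∫ (|x-y| + ε α(x-y)) dπ`. -/
noncomputable def costEps (ε : ℝ) (π : Measure (H × H)) : ℝ≥0∞ :=
  ∫⁻ p, ENNReal.ofReal (‖p.1 - p.2‖ + ε * alphaCost (p.1 - p.2)) ∂π

/-- The 1-Wasserstein distance. -/
noncomputable def W1 (ρ₀ ρ₁ : Measure H) : ℝ≥0∞ :=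
  ⨅ π ∈ Coupling ρ₀ ρ₁, cost1 π

/-- `W_ε(ρ₀,ρ₁) = inf ∫ c_ε(x-y) dπ` over couplings. -/
noncomputable def Weps (ε : ℝ) (ρ₀ ρ₁ : Measure H) : ℝ≥0∞ :=
  ⨅ π ∈ Coupling ρ₀ ρ₁, costEps ε π

/-- The set of optimal couplings for `∫ |x-y| dπ`. -/
def O1 (ρ₀ ρ₁ : Measure H) : Set (Measure (H × H)) :=
  {π ∈ Coupling ρ₀ ρ₁ | ∀ π' ∈ Coupling ρ₀ ρ₁, cost1 π ≤ cost1 π'}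

/-- The set of optimal couplings of the second variational problem. -/
def O2 (ρ₀ ρ₁ : Measure H) : Set (Measure (H × H)) :=
  {π ∈ O1 ρ₀ ρ₁ | ∀ π' ∈ O1 ρ₀ ρ₁, cost2 π ≤ cost2 π'}

/-- The displacement interpolation `ρ_t = ((1-t) P₁ + t P₂)_# π`. -/
noncomputable def interp (t : ℝ) (π : Measure (H × H)) : Measure H :=
  Measure.map (fun p : H × H => (1 - t) • p.1 + t • p.2) π

/-- `π` enjoys the convexity property: the relative entropy is `1`-convex along
`t ↦ ((1-t)P₁ + tP₂)_#π`. -/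
def ConvexityProperty (γ ρ₀ ρ₁ : Measure H) (π : Measure (H × H)) : Prop :=
  ∀ t ∈ Set.Ioo (0 : ℝ) 1,
    Ent γ (interp t π) ≤ ((1 - t : ℝ) : EReal) * Ent γ ρ₀ + ((t : ℝ) : EReal) * Ent γ ρ₁
      - ((ENNReal.ofReal (t * (1 - t) / 2) * (W1 ρ₀ ρ₁ * W1 ρ₀ ρ₁) : ℝ≥0∞) : EReal)

/-- `O̅₂(ρ₀,ρ₁)`: elements of `O₂(ρ₀,ρ₁)` enjoying the convexity property. -/
def O2bar (γ ρ₀ ρ₁ : Measure H) : Set (Measure (H × H)) :=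
  {π ∈ O2 ρ₀ ρ₁ | ConvexityProperty γ ρ₀ ρ₁ π}

/-- `x` is a Lebesgue point of `f` w.r.t. `γ`. -/
def IsLebesguePoint (γ : Measure H) (f : H → ℝ) (x : H) : Prop :=
  Tendsto (fun r : ℝ => (∫ y in ball x r, |f y - f x| ∂γ) / (γ (ball x r)).toReal)
    (nhdsWithin 0 (Set.Ioi 0)) (nhds 0)

/-- Weak convergence of a sequence of measures (against bounded continuous functions). -/
def WeakLimit {X : Type*} [MeasurableSpace X] [TopologicalSpace X]
    (μs : ℕ → Measure X) (μ : Measure X) : Prop :=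
  ∀ f : BoundedContinuousFunction X ℝ,
    Tendsto (fun n => ∫ x, f x ∂(μs n)) atTop (nhds (∫ x, f x ∂μ))

end Hilbert

variable {H : Type*} [NormedAddCommGroup H] [InnerProductSpace ℝ H] [CompleteSpace H]
  [TopologicalSpace.SeparableSpace H] [MeasurableSpace H] [BorelSpace H]

/-!
Relative entropy against a probability measure `γ` is the Donsker–Varadhan supremum of
`∫ f dρ - log ∫ exp f dγ` over bounded continuous `f`. One inequality is Gibbs' inequality for the
tilted measure `exp f • γ / ∫ exp f dγ`. For the other, the bound is first extended to bounded
measurable `f` by approximation in `L¹(ρ + γ)`, then tested on `log` of the density clamped to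
`[exp (-n), exp n]`, and Fatou's lemma is applied to `klFun` of the density. As a supremum of
weakly continuous functionals the entropy is weakly lower semicontinuous, and the interpolations
`((1-t)P₁ + tP₂)_# Π_ε` converge weakly to `ρ_t`. Since `W_ε ≥ W₁`, the `ε`-inequalities bound
`Ent_γ(ρ_t^ε)` by real numbers converging to the claimed bound as `ε → 0`.
-/

open InformationTheory Topology BoundedContinuousFunction

section DonskerVaradhan

open Real

variable {X : Type*} [MeasurableSpace X] {ρ γ : Measure X}

lemma integrable_exp_of_abs_le {μ : Measure X} [IsFiniteMeasure μ] {f : X → ℝ}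
    (hf : AEStronglyMeasurable f μ) {B : ℝ} (hB : ∀ x, |f x| ≤ B) :
    Integrable (fun x => exp (f x)) μ :=
  .of_bound (continuous_exp.comp_aestronglyMeasurable hf) (exp B) <| ae_of_all _ fun x => by
    rw [norm_of_nonneg (exp_pos _).le]
    exact exp_le_exp.2 (abs_le.1 (hB x)).2

lemma integral_le_toReal_klDiv_add_log_integral_exp [IsProbabilityMeasure ρ]
    [IsProbabilityMeasure γ] (hρ : klDiv ρ γ ≠ ∞) {f : X → ℝ} (hfρ : Integrable f ρ)
    (hfγ : Integrable (fun x => exp (f x)) γ) :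
    ∫ x, f x ∂ρ ≤ (klDiv ρ γ).toReal + log (∫ x, exp (f x) ∂γ) := by
  obtain ⟨hac, hint⟩ := klDiv_ne_top_iff.1 hρ
  have := isProbabilityMeasure_tilted hfγ
  have hgibbs := integral_llr_add_sub_measure_univ_nonneg
    (hac.trans (absolutelyContinuous_tilted hfγ)) (integrable_llr_tilted_right hac hfρ hint hfγ)
  rw [integral_llr_tilted_right hac hfρ hfγ hint] at hgibbs
  rw [toReal_klDiv_of_measure_eq hac (by simp)]
  simp only [probReal_univ] at hgibbs
  linarith

lemma absolutelyContinuous_of_forall_integral_le [IsFiniteMeasure ρ] {c : ℝ}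
    (hc : ∀ f : X → ℝ, Measurable f → ∀ B, (∀ x, |f x| ≤ B) →
      ∫ x, f x ∂ρ ≤ c + log (∫ x, exp (f x) ∂γ)) :
    ρ ≪ γ := by
  refine Measure.AbsolutelyContinuous.mk fun s hs hγs => ?_
  have hbound : ∀ n : ℕ, n * ρ.real s ≤ c + log (γ.real univ) := by
    intro n
    have hexp : (fun x => exp (s.indicator (fun _ => (n : ℝ)) x)) =ᵐ[γ] fun _ => 1 := by
      filter_upwards [measure_eq_zero_iff_ae_notMem.1 hγs] with x hx
      simp [Set.indicator_of_notMem hx]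
    have := hc (s.indicator fun _ => (n : ℝ)) (measurable_const.indicator hs) n fun x => by
      by_cases hx : x ∈ s <;> simp [hx]
    rwa [integral_indicator_const _ hs, integral_congr_ae hexp, integral_const, smul_eq_mul,
      smul_eq_mul, mul_one, mul_comm] at this
  refine (measureReal_eq_zero_iff (measure_ne_top ρ s)).1 (le_antisymm ?_ measureReal_nonneg)
  by_contra! hpos
  obtain ⟨n, hn⟩ := exists_nat_gt ((c + log (γ.real univ)) / ρ.real s)
  rw [div_lt_iff₀ hpos] at hn
  linarith [hbound n]

lemma mul_log_clamp_sub_add_one_nonneg {y a b : ℝ} (ha : 0 < a) (ha1 : a ≤ 1) (hb : 1 ≤ b) :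
    0 ≤ y * log (max a (min b y)) - max a (min b y) + 1 := by
  set z := max a (min b y)
  have hz : 0 < z := lt_max_of_lt_left ha
  -- `z` lies between `1` and `y`, so `y - z` and `log z` have the same sign
  have hsign : 0 ≤ (y - z) * log z := by
    rcases le_total 1 y with h1 | h1
    · have hz1 : 1 ≤ z := le_max_of_le_right (le_min hb h1)
      exact mul_nonneg (sub_nonneg.2 (max_le (ha1.trans h1) (min_le_right _ _)))
        (log_nonneg hz1)
    · have hz1 : z ≤ 1 := max_le ha1 ((min_le_right _ _).trans h1)
      exact mul_nonneg_of_nonpos_of_nonpos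
        (sub_nonpos.2 (le_max_of_le_right (le_min (h1.trans hb) le_rfl))) (log_nonpos hz.le hz1)
  have hkl := klFun_nonneg hz.le
  rw [klFun_apply] at hkl
  nlinarith

noncomputable def clampedRnDeriv (ρ γ : Measure X) (n : ℕ) (x : X) : ℝ :=
  max (exp (-n)) (min (exp n) (ρ.rnDeriv γ x).toReal)

@[fun_prop]
lemma measurable_clampedRnDeriv (n : ℕ) : Measurable (clampedRnDeriv ρ γ n) := by
  unfold clampedRnDeriv
  fun_prop

lemma clampedRnDeriv_pos (n : ℕ) (x : X) : 0 < clampedRnDeriv ρ γ n x :=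
  lt_max_of_lt_left (exp_pos _)

lemma clampedRnDeriv_le_exp (n : ℕ) (x : X) : clampedRnDeriv ρ γ n x ≤ exp n :=
  max_le (exp_le_exp.2 (by simp)) (min_le_left _ _)

lemma abs_log_clampedRnDeriv_le (n : ℕ) (x : X) : |log (clampedRnDeriv ρ γ n x)| ≤ n := by
  have hlow : -(n : ℝ) ≤ log (clampedRnDeriv ρ γ n x) := by
    rw [← log_exp (-(n : ℝ))]
    exact log_le_log (exp_pos _) (le_max_left _ _)
  have hup : log (clampedRnDeriv ρ γ n x) ≤ n := by
    simpa using log_le_log (clampedRnDeriv_pos n x) (clampedRnDeriv_le_exp n x)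
  exact abs_le.2 ⟨hlow, hup⟩

lemma integrable_clampedRnDeriv {μ : Measure X} [IsFiniteMeasure μ] (n : ℕ) :
    Integrable (clampedRnDeriv ρ γ n) μ :=
  .of_bound (by fun_prop) (exp n) <| ae_of_all _ fun x => by
    rw [norm_of_nonneg (clampedRnDeriv_pos n x).le]
    exact clampedRnDeriv_le_exp n x

lemma tendsto_clampedRnDeriv (x : X) :
    Tendsto (fun n => clampedRnDeriv ρ γ n x) atTop (𝓝 (ρ.rnDeriv γ x).toReal) := by
  have hlow : Tendsto (fun n : ℕ => max (exp (-n)) (ρ.rnDeriv γ x).toReal) atTop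
      (𝓝 (ρ.rnDeriv γ x).toReal) := by
    have := (tendsto_exp_neg_atTop_nhds_zero.comp tendsto_natCast_atTop_atTop).max
      (tendsto_const_nhds (x := (ρ.rnDeriv γ x).toReal))
    rwa [max_eq_right ENNReal.toReal_nonneg] at this
  refine hlow.congr' ?_
  filter_upwards [(tendsto_exp_atTop.comp tendsto_natCast_atTop_atTop).eventually_ge_atTop
    (ρ.rnDeriv γ x).toReal] with n hn
  rw [clampedRnDeriv, min_eq_right (by exact hn)]

noncomputable def klFunApprox (ρ γ : Measure X) (n : ℕ) (x : X) : ℝ :=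
  (ρ.rnDeriv γ x).toReal * log (clampedRnDeriv ρ γ n x) - clampedRnDeriv ρ γ n x + 1

lemma klFunApprox_nonneg (n : ℕ) (x : X) : 0 ≤ klFunApprox ρ γ n x :=
  mul_log_clamp_sub_add_one_nonneg (exp_pos _) (exp_le_one_iff.2 (by simp))
    (one_le_exp (by positivity))

lemma tendsto_klFunApprox (x : X) :
    Tendsto (fun n => klFunApprox ρ γ n x) atTop (𝓝 (klFun (ρ.rnDeriv γ x).toReal)) := by
  set y := (ρ.rnDeriv γ x).toReal
  have hz := tendsto_clampedRnDeriv (ρ := ρ) (γ := γ) x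
  have hlog : Tendsto (fun n => y * log (clampedRnDeriv ρ γ n x)) atTop (𝓝 (y * log y)) := by
    rcases (show 0 ≤ y from ENNReal.toReal_nonneg).eq_or_lt with hy | hy
    · simp [← hy]
    · exact ((continuousAt_log hy.ne').tendsto.comp hz).const_mul y
  have hkl : klFun y = y * log y - y + 1 := by
    rw [klFun_apply]
    ring
  rw [hkl]
  exact (hlog.sub hz).add_const 1

lemma integrable_mul_log_clampedRnDeriv [IsFiniteMeasure ρ] (n : ℕ) :
    Integrable (fun x => (ρ.rnDeriv γ x).toReal * log (clampedRnDeriv ρ γ n x)) γ :=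
  Measure.integrable_toReal_rnDeriv.mul_bdd (measurable_clampedRnDeriv n).log.aestronglyMeasurable
    (ae_of_all _ (abs_log_clampedRnDeriv_le n))

lemma integral_klFunApprox [IsFiniteMeasure ρ] [IsFiniteMeasure γ] (hac : ρ ≪ γ) (n : ℕ) :
    ∫ x, klFunApprox ρ γ n x ∂γ
      = ∫ x, log (clampedRnDeriv ρ γ n x) ∂ρ - ∫ x, clampedRnDeriv ρ γ n x ∂γ + γ.real univ := by
  have hint := integrable_mul_log_clampedRnDeriv (γ := γ) (ρ := ρ) n
  unfold klFunApprox
  rw [integral_add ?_ (integrable_const 1), integral_sub hint (integrable_clampedRnDeriv n),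
    ← integral_rnDeriv_smul hac]
  · simp
  · exact hint.sub (integrable_clampedRnDeriv n)

lemma klDiv_le_ofReal_of_forall_integral_le [IsFiniteMeasure ρ] [IsProbabilityMeasure γ] {c : ℝ}
    (hc : ∀ f : X → ℝ, Measurable f → ∀ B, (∀ x, |f x| ≤ B) →
      ∫ x, f x ∂ρ ≤ c + log (∫ x, exp (f x) ∂γ)) :
    klDiv ρ γ ≤ ENNReal.ofReal c := by
  have hac := absolutelyContinuous_of_forall_integral_le hc
  have hint : ∀ n, Integrable (klFunApprox ρ γ n) γ := fun n =>
    ((integrable_mul_log_clampedRnDeriv n).sub (integrable_clampedRnDeriv n)).add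
      (integrable_const 1)
  -- the bound for the test function `log (clampedRnDeriv ρ γ n)`, combined with `log s ≤ s - 1`
  have hle : ∀ n, ∫ x, klFunApprox ρ γ n x ∂γ ≤ c := by
    intro n
    have hdv := hc (fun x => log (clampedRnDeriv ρ γ n x)) (by fun_prop) n
      (abs_log_clampedRnDeriv_le n)
    have hpos := integral_exp_pos (μ := γ) (f := fun x => log (clampedRnDeriv ρ γ n x))
      (by simpa only [exp_log (clampedRnDeriv_pos n _)] using integrable_clampedRnDeriv n)
    simp only [exp_log (clampedRnDeriv_pos n _)] at hdv hpos
    rw [integral_klFunApprox hac, probReal_univ]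
    linarith [log_le_sub_one_of_pos hpos]
  calc klDiv ρ γ = ∫⁻ x, ENNReal.ofReal (klFun (ρ.rnDeriv γ x).toReal) ∂γ :=
        klDiv_eq_lintegral_klFun_of_ac hac
    _ = ∫⁻ x, liminf (fun n => ENNReal.ofReal (klFunApprox ρ γ n x)) atTop ∂γ :=
        lintegral_congr fun x =>
          ((ENNReal.continuous_ofReal.tendsto _).comp (tendsto_klFunApprox x)).liminf_eq.symm
    _ ≤ liminf (fun n => ∫⁻ x, ENNReal.ofReal (klFunApprox ρ γ n x) ∂γ) atTop :=
        lintegral_liminf_le fun n => by unfold klFunApprox; fun_prop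
    _ ≤ ENNReal.ofReal c := liminf_le_of_frequently_le' <| Frequently.of_forall fun n => by
        rw [← ofReal_integral_eq_lintegral_ofReal (hint n) (ae_of_all _ (klFunApprox_nonneg n))]
        exact ENNReal.ofReal_le_ofReal (hle n)

end DonskerVaradhan

section Entropy

variable {X : Type*} [MeasurableSpace X] {ρ γ : Measure X}

lemma Ent_ne_bot : Ent γ ρ ≠ ⊥ := by
  unfold Ent
  split_ifs <;> simp

lemma exists_Ent_eq_coe (h : Ent γ ρ < ⊤) : ∃ E : ℝ, Ent γ ρ = E :=
  ⟨_, (EReal.coe_toReal h.ne Ent_ne_bot).symm⟩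

lemma absolutelyContinuous_of_Ent_ne_top (h : Ent γ ρ ≠ ⊤) : ρ ≪ γ := by
  by_contra hac
  exact h (by simp [Ent, hac])

lemma Ent_eq_klDiv [IsProbabilityMeasure ρ] [IsProbabilityMeasure γ] : Ent γ ρ = klDiv ρ γ := by
  by_cases h : ρ ≪ γ ∧ Integrable (llr ρ γ) ρ
  · rw [Ent, if_pos h, ← EReal.coe_ennreal_toReal (klDiv_ne_top h.1 h.2),
      toReal_klDiv_of_measure_eq h.1 (by simp)]
  · rw [Ent, if_neg h, klDiv_eq_top_iff.2 fun hac hint => h ⟨hac, hint⟩]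
    rfl

lemma klDiv_ne_top_and_toReal_le_of_Ent_le [IsProbabilityMeasure ρ] [IsProbabilityMeasure γ]
    {b : ℝ} (h : Ent γ ρ ≤ b) : klDiv ρ γ ≠ ∞ ∧ (klDiv ρ γ).toReal ≤ b := by
  rw [Ent_eq_klDiv] at h
  have hne : klDiv ρ γ ≠ ∞ := by
    rintro htop
    simp [htop] at h
  rw [← EReal.coe_ennreal_toReal hne, EReal.coe_le_coe_iff] at h
  exact ⟨hne, h⟩

end Entropy

section WeakLowerSemicontinuity

open Real

variable {X : Type*} [TopologicalSpace X] [TopologicalSpace.PseudoMetrizableSpace X]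
  [MeasurableSpace X] [BorelSpace X]

lemma exists_seq_boundedContinuous_tendsto_ae (μ : Measure X) [IsFiniteMeasure μ] {f : X → ℝ}
    (hf : Measurable f) {B : ℝ} (hB : ∀ x, |f x| ≤ B) :
    ∃ g : ℕ → X →ᵇ ℝ, (∀ k x, |g k x| ≤ B) ∧
      ∀ᵐ x ∂μ, Tendsto (fun k => g k x) atTop (𝓝 (f x)) := by
  have hfi : Integrable f μ := .of_bound hf.aestronglyMeasurable B (ae_of_all _ hB)
  choose g hg using fun k : ℕ =>
    hfi.exists_boundedContinuous_lintegral_sub_le (ε := (k : ℝ≥0∞)⁻¹) (by simp)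
  have hL1 : Tendsto (fun k => eLpNorm (⇑(g k) - f) 1 μ) atTop (𝓝 0) := by
    refine tendsto_of_tendsto_of_tendsto_of_le_of_le tendsto_const_nhds
      ENNReal.tendsto_inv_nat_nhds_zero (fun _ => zero_le) fun k => ?_
    simpa [eLpNorm_one_eq_lintegral_enorm, enorm_sub_rev] using (hg k).1
  obtain ⟨ns, -, hns⟩ := (tendstoInMeasure_of_tendsto_eLpNorm one_ne_zero
    (fun k => (g k).continuous.aestronglyMeasurable) hf.aestronglyMeasurable
    hL1).exists_seq_tendsto_ae
  -- clamping to `[-B, B]` keeps the limit, since it fixes `f`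
  set clamp : ℝ → ℝ := fun y => max (-B) (min B y)
  have hclamp : Continuous clamp := by fun_prop
  have hclamp_le : ∀ (x : X) y, |clamp y| ≤ B := fun x y =>
    abs_le.2 ⟨le_max_left _ _, max_le (by linarith [(abs_nonneg (f x)).trans (hB x)])
      (min_le_left _ _)⟩
  refine ⟨fun k => .ofNormedAddCommGroup (clamp ∘ g (ns k)) (hclamp.comp (g (ns k)).continuous) B
    fun x => hclamp_le x _, fun k x => hclamp_le x _, hns.mono fun x hx => ?_⟩
  have hfx : clamp (f x) = f x := by
    have := abs_le.1 (hB x)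
    simp [clamp, min_eq_right this.2, max_eq_right this.1]
  simpa [hfx, Function.comp_def] using (hclamp.tendsto (f x)).comp hx

lemma integral_le_add_log_integral_exp_of_forall_boundedContinuous {ρ γ : Measure X}
    [IsFiniteMeasure ρ] [IsFiniteMeasure γ] [NeZero γ] {c : ℝ}
    (hc : ∀ f : X →ᵇ ℝ, ∫ x, f x ∂ρ ≤ c + log (∫ x, exp (f x) ∂γ))
    (f : X → ℝ) (hf : Measurable f) (B : ℝ) (hB : ∀ x, |f x| ≤ B) :
    ∫ x, f x ∂ρ ≤ c + log (∫ x, exp (f x) ∂γ) := by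
  obtain ⟨g, hgB, hg⟩ := exists_seq_boundedContinuous_tendsto_ae (ρ + γ) hf hB
  obtain ⟨hgρ, hgγ⟩ := ae_add_measure_iff.1 hg
  have hρ : Tendsto (fun k => ∫ x, g k x ∂ρ) atTop (𝓝 (∫ x, f x ∂ρ)) :=
    tendsto_integral_of_dominated_convergence (fun _ => B)
      (fun k => (g k).continuous.aestronglyMeasurable) (integrable_const B)
      (fun k => ae_of_all _ (hgB k)) hgρ
  have hγ : Tendsto (fun k => ∫ x, exp (g k x) ∂γ) atTop (𝓝 (∫ x, exp (f x) ∂γ)) :=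
    tendsto_integral_of_dominated_convergence (fun _ => exp B)
      (fun k => (g k).continuous.rexp.aestronglyMeasurable) (integrable_const _)
      (fun k => ae_of_all _ fun x => by
        rw [norm_of_nonneg (exp_pos _).le]
        exact exp_le_exp.2 (abs_le.1 (hgB k x)).2)
      (hgγ.mono fun x hx => (continuous_exp.tendsto _).comp hx)
  have hpos := integral_exp_pos (integrable_exp_of_abs_le hf.aestronglyMeasurable hB (μ := γ))
  exact le_of_tendsto_of_tendsto' hρ
    (tendsto_const_nhds.add ((continuousAt_log hpos.ne').tendsto.comp hγ)) fun k => hc (g k)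

theorem Ent_le_of_weakLimit {γ : Measure X} [IsProbabilityMeasure γ] {μs : ℕ → Measure X}
    [∀ n, IsProbabilityMeasure (μs n)] {μ : Measure X} [IsProbabilityMeasure μ]
    (hμ : WeakLimit μs μ) {b : ℕ → ℝ} {b₀ : ℝ} (hEnt : ∀ n, Ent γ (μs n) ≤ b n)
    (hb : Tendsto b atTop (𝓝 b₀)) :
    Ent γ μ ≤ b₀ := by
  have hdv : ∀ f : X →ᵇ ℝ, ∫ x, f x ∂μ ≤ b₀ + log (∫ x, exp (f x) ∂γ) := by
    intro f
    refine le_of_tendsto_of_tendsto' (hμ f) (hb.add_const _) fun n => ?_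
    obtain ⟨hne, hle⟩ := klDiv_ne_top_and_toReal_le_of_Ent_le (hEnt n)
    have := integral_le_toReal_klDiv_add_log_integral_exp hne (f.integrable _)
      (integrable_exp_of_abs_le f.continuous.aestronglyMeasurable fun x =>
        (norm_eq_abs (f x)).symm.trans_le (f.norm_coe_le_norm x))
    linarith
  have hb₀ : 0 ≤ b₀ := by simpa using hdv 0
  rw [Ent_eq_klDiv, ← max_eq_left hb₀, ← EReal.coe_ennreal_ofReal,
    EReal.coe_ennreal_le_coe_ennreal_iff]
  exact klDiv_le_ofReal_of_forall_integral_le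
    (integral_le_add_log_integral_exp_of_forall_boundedContinuous hdv)

end WeakLowerSemicontinuity

lemma EReal.ne_top_of_le_sub_coe_ennreal {x y : EReal} {P : ℝ≥0∞} (hx : x ≠ ⊥)
    (h : x ≤ y - P) : P ≠ ⊤ := by
  rintro rfl
  simp_all

lemma EReal.le_coe_sub_of_le_coe_sub_coe_ennreal {x : EReal} {a r : ℝ} {P : ℝ≥0∞}
    (h : x ≤ a - P) (hr : ENNReal.ofReal r ≤ P) : x ≤ ((a - r : ℝ) : EReal) := by
  calc x ≤ a - P := h
    _ ≤ a - (ENNReal.ofReal r : EReal) :=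
        EReal.sub_le_sub le_rfl (EReal.coe_ennreal_le_coe_ennreal_iff.2 hr)
    _ = ((a - max r 0 : ℝ) : EReal) := by rw [EReal.coe_ennreal_ofReal, EReal.coe_sub]
    _ ≤ ((a - r : ℝ) : EReal) := EReal.coe_le_coe_iff.2 (by linarith [le_max_left r 0])

lemma EReal.coe_sub_coe_ofReal_mul_ofReal_mul_ofReal {a k w : ℝ} (hk : 0 ≤ k) (hw : 0 ≤ w) :
    (a : EReal) - ((ENNReal.ofReal k * (ENNReal.ofReal w * ENNReal.ofReal w) : ℝ≥0∞) : EReal)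
      = ((a - k * w ^ 2 : ℝ) : EReal) := by
  rw [← ENNReal.ofReal_mul hw, ← ENNReal.ofReal_mul hk, EReal.coe_ennreal_ofReal,
    max_eq_left (by positivity), ← EReal.coe_sub, sq]

lemma ENNReal.ne_top_of_ofReal_mul_sq_sub_ne_top {k e : ℝ} (hk : 0 < k) {y : ℝ≥0∞}
    (h : ENNReal.ofReal k * (y - ENNReal.ofReal e) ^ 2 ≠ ⊤) : y ≠ ⊤ := by
  rintro rfl
  simp [ENNReal.mul_top, hk] at h

noncomputable def epsPenalty (k w e : ℝ) : ℝ := k / (2 * (1 + e) ^ 2) * max (w - e) 0 ^ 2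

lemma ofReal_epsPenalty_le {k w e : ℝ} (hk : 0 ≤ k) (he : 0 ≤ e) {y : ℝ≥0∞}
    (hwy : ENNReal.ofReal w ≤ y) :
    ENNReal.ofReal (epsPenalty k w e)
      ≤ ENNReal.ofReal (k / (2 * (1 + e) ^ 2)) * (y - ENNReal.ofReal e) ^ 2 := by
  rw [epsPenalty, ENNReal.ofReal_mul (by positivity), ENNReal.ofReal_pow (le_max_right _ _),
    ENNReal.ofReal_max, ENNReal.ofReal_zero, max_eq_left zero_le, ENNReal.ofReal_sub _ he]
  gcongr

lemma tendsto_epsPenalty (k : ℝ) {w : ℝ} (hw : 0 ≤ w) {ε : ℕ → ℝ}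
    (hε : Tendsto ε atTop (𝓝 0)) :
    Tendsto (fun n => epsPenalty k w (ε n)) atTop (𝓝 (k / 2 * w ^ 2)) := by
  have hcont : ContinuousAt (epsPenalty k w) 0 := by
    unfold epsPenalty
    fun_prop (disch := norm_num)
  simpa [epsPenalty, Function.comp_def, max_eq_left hw] using hcont.tendsto.comp hε

section Transport

variable {E : Type*} [MeasurableSpace E]

lemma isProbabilityMeasure_of_mem_coupling {ρ₀ ρ₁ : Measure E} [IsProbabilityMeasure ρ₀]
    {π : Measure (E × E)} (hπ : π ∈ Coupling ρ₀ ρ₁) : IsProbabilityMeasure π := by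
  constructor
  have h := hπ.1 ▸ measure_univ (μ := ρ₀)
  rwa [Measure.map_apply measurable_fst MeasurableSet.univ, Set.preimage_univ] at h

variable [NormedAddCommGroup E]

lemma W1_le_Weps {ρ₀ ρ₁ : Measure E} {e : ℝ} (he : 0 ≤ e) : W1 ρ₀ ρ₁ ≤ Weps e ρ₀ ρ₁ :=
  iInf₂_mono fun _ _ => lintegral_mono fun _ => ENNReal.ofReal_le_ofReal <|
    le_add_of_nonneg_right (mul_nonneg he (Real.sqrt_nonneg _))

lemma WeakLimit.map {X Y : Type*} [MeasurableSpace X] [TopologicalSpace X] [MeasurableSpace Y]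
    [TopologicalSpace Y] [OpensMeasurableSpace Y] {μs : ℕ → Measure X} {μ : Measure X}
    (h : WeakLimit μs μ) {T : X → Y} (hT : Continuous T) (hTm : Measurable T) :
    WeakLimit (fun n => (μs n).map T) (μ.map T) := by
  intro f
  simp only [integral_map hTm.aemeasurable f.continuous.aestronglyMeasurable]
  exact h (f.compContinuous ⟨T, hT⟩)

variable [InnerProductSpace ℝ E] [SecondCountableTopology E] [BorelSpace E]

lemma measurable_interpolation (t : ℝ) : Measurable fun p : E × E => (1 - t) • p.1 + t • p.2 := by
  fun_prop

instance isProbabilityMeasure_interp (t : ℝ) (π : Measure (E × E)) [IsProbabilityMeasure π] :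
    IsProbabilityMeasure (interp t π) :=
  Measure.isProbabilityMeasure_map (measurable_interpolation t).aemeasurable

lemma WeakLimit.interp {πs : ℕ → Measure (E × E)} {π : Measure (E × E)} (h : WeakLimit πs π)
    (t : ℝ) : WeakLimit (fun n => interp t (πs n)) (interp t π) :=
  h.map (by fun_prop) (measurable_interpolation t)

end Transport

theorem entropy_convexity_of_weak_limit_general
    (γ : Measure H) (hγ : IsCenteredGaussian γ)
    (ρ₀ ρ₁ : Measure H) [IsProbabilityMeasure ρ₀]
    (h₀ : Ent γ ρ₀ < ⊤) (h₁ : Ent γ ρ₁ < ⊤)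
    (π : Measure (H × H)) (hπ : π ∈ Coupling ρ₀ ρ₁)
    (ε : ℕ → ℝ) (πε : ℕ → Measure (H × H))
    (hεpos : ∀ n, 0 < ε n) (hε0 : Tendsto ε atTop (nhds 0))
    (hcpl : ∀ n, πε n ∈ Coupling ρ₀ ρ₁)
    (hconv : ∀ n, ∀ t ∈ Set.Ioo (0 : ℝ) 1,
      Ent γ (interp t (πε n))
        ≤ ((1 - t : ℝ) : EReal) * Ent γ ρ₀ + ((t : ℝ) : EReal) * Ent γ ρ₁
          - ((ENNReal.ofReal (t * (1 - t) / (2 * (1 + ε n) ^ 2)) *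
              (Weps (ε n) ρ₀ ρ₁ - ENNReal.ofReal (ε n)) ^ 2 : ℝ≥0∞) : EReal))
    (hlim : WeakLimit πε π) :
    ∀ t ∈ Set.Ioo (0 : ℝ) 1,
      Ent γ (interp t π)
          ≤ ((1 - t : ℝ) : EReal) * Ent γ ρ₀ + ((t : ℝ) : EReal) * Ent γ ρ₁
            - ((ENNReal.ofReal (t * (1 - t) / 2) * (W1 ρ₀ ρ₁ * W1 ρ₀ ρ₁) : ℝ≥0∞) : EReal)
        ∧ Ent γ (interp t π) < ⊤ ∧ interp t π ≪ γ := by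
  have := hγ.1
  have := isProbabilityMeasure_of_mem_coupling hπ
  have := fun n => isProbabilityMeasure_of_mem_coupling (hcpl n)
  rintro t ht
  have hk : 0 < t * (1 - t) := mul_pos ht.1 (by linarith [ht.2])
  obtain ⟨E₀, hE₀⟩ := exists_Ent_eq_coe h₀
  obtain ⟨E₁, hE₁⟩ := exists_Ent_eq_coe h₁
  have ha : ((1 - t : ℝ) : EReal) * E₀ + (t : EReal) * E₁
      = (((1 - t) * E₀ + t * E₁ : ℝ) : EReal) := by
    norm_cast
  -- `W₁ = ∞` would make the right-hand side of the `ε`-inequality `⊥`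
  have hW : W1 ρ₀ ρ₁ ≠ ⊤ := ne_top_of_le_ne_top
    (ENNReal.ne_top_of_ofReal_mul_sq_sub_ne_top (by have := hεpos 0; positivity)
      (EReal.ne_top_of_le_sub_coe_ennreal Ent_ne_bot (hconv 0 t ht)))
    (W1_le_Weps (hεpos 0).le)
  obtain ⟨w, hw, hW1⟩ : ∃ w, 0 ≤ w ∧ W1 ρ₀ ρ₁ = ENNReal.ofReal w :=
    ⟨_, ENNReal.toReal_nonneg, (ENNReal.ofReal_toReal hW).symm⟩
  have hbound : ∀ n, Ent γ (interp t (πε n))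
      ≤ (((1 - t) * E₀ + t * E₁ - epsPenalty (t * (1 - t)) w (ε n) : ℝ) : EReal) := fun n =>
    EReal.le_coe_sub_of_le_coe_sub_coe_ennreal (by simpa only [hE₀, hE₁, ha] using hconv n t ht)
      (ofReal_epsPenalty_le hk.le (hεpos n).le (hW1 ▸ W1_le_Weps (hεpos n).le))
  have hEnt := Ent_le_of_weakLimit (hlim.interp t) hbound
    (tendsto_const_nhds.sub (tendsto_epsPenalty _ hw hε0))
  have hfin : Ent γ (interp t π) < ⊤ := hEnt.trans_lt (EReal.coe_lt_top _)
  refine ⟨?_, hfin, absolutelyContinuous_of_Ent_ne_top hfin.ne⟩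
  rwa [hE₀, hE₁, ha, hW1, EReal.coe_sub_coe_ofReal_mul_ofReal_mul_ofReal (by positivity) hw]

/-- If `π` is a weak limit point of solutions `π_ε` of the perturbed problems `(P_ε)`, each
satisfying the `ε`-entropy convexity inequality, then the relative entropy is `1`-convex along
`ρ_t = ((1-t)P₁ + tP₂)_#π`; in particular each `ρ_t` has finite relative entropy, hence is
absolutely continuous w.r.t. `γ`. -/
theorem entropy_convexity_of_weak_limit
    (hinf : ¬ FiniteDimensional ℝ H)
    (γ : Measure H) (hγ : IsCenteredGaussian γ) (hTi : TiserCondition γ)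
    (ρ₀ ρ₁ : Measure H) [IsProbabilityMeasure ρ₀] [IsProbabilityMeasure ρ₁]
    (h₀ : Ent γ ρ₀ < ⊤) (h₁ : Ent γ ρ₁ < ⊤)
    (π : Measure (H × H)) (hπ : π ∈ Coupling ρ₀ ρ₁)
    (ε : ℕ → ℝ) (πε : ℕ → Measure (H × H))
    (hεpos : ∀ n, 0 < ε n) (hε0 : Tendsto ε atTop (nhds 0))
    (hcpl : ∀ n, πε n ∈ Coupling ρ₀ ρ₁)
    (hopt : ∀ n, ∀ π' ∈ Coupling ρ₀ ρ₁, costEps (ε n) (πε n) ≤ costEps (ε n) π')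
    (hconv : ∀ n, ∀ t ∈ Set.Ioo (0 : ℝ) 1,
      Ent γ (interp t (πε n))
        ≤ ((1 - t : ℝ) : EReal) * Ent γ ρ₀ + ((t : ℝ) : EReal) * Ent γ ρ₁
          - ((ENNReal.ofReal (t * (1 - t) / (2 * (1 + ε n) ^ 2)) *
              (Weps (ε n) ρ₀ ρ₁ - ENNReal.ofReal (ε n)) ^ 2 : ℝ≥0∞) : EReal))
    (hlim : WeakLimit πε π) :
    ∀ t ∈ Set.Ioo (0 : ℝ) 1,
      Ent γ (interp t π)
          ≤ ((1 - t : ℝ) : EReal) * Ent γ ρ₀ + ((t : ℝ) : EReal) * Ent γ ρ₁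
            - ((ENNReal.ofReal (t * (1 - t) / 2) * (W1 ρ₀ ρ₁ * W1 ρ₀ ρ₁) : ℝ≥0∞) : EReal)
        ∧ Ent γ (interp t π) < ⊤ ∧ interp t π ≪ γ :=
  entropy_convexity_of_weak_limit_general γ hγ ρ₀ ρ₁ h₀ h₁ π hπ ε πε hεpos hε0 hcpl hconv hlim
end

section
/- Let μ and ν be probability measures on a Polish metric space (X,d) and let c(x,y) = d(x,y). If Π is an optimal coupling for the Monge–Kantorovich problem between μ and ν with respect to c, and the optimal cost is finite, then there exists a μ-measurable 1-Lipschitz function u : X → ℝ such that u(x) − u(y) = d(x,y) for all (x,y) in the support of Π, and u(x) − u(y) ≤ d(x,y) for all x,y ∈ X. -/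
open MeasureTheory ProbabilityTheory Filter Metric Set
open scoped ENNReal NNReal

/-- The support of a measure: points all of whose neighborhoods have positive measure
(equivalently, the complement of the largest open null set, i.e. the smallest closed set
of full measure when the space is second countable). -/
def msupport {X : Type*} [TopologicalSpace X] [MeasurableSpace X] (μ : Measure X) : Set X :=
  {x | ∀ U : Set X, IsOpen U → x ∈ U → 0 < μ U}

/-!
The support of an optimal plan is cyclically monotone for the cost `d`: if a finite cycle of
support points could be rerouted more cheaply, then moving a little mass from small balls around
the points of the cycle onto products of the rerouted marginal pieces would keep the marginals and
lower the cost. Rockafellar's construction turns cyclical monotonicity into a potential: for a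
fixed support pair `(x₀, y₀)`, `u x` is the infimum, over chains `(x₁, y₁), …, (xₖ, yₖ)` of support
pairs, of `d(x, y₁) - d(x₁, y₁) + d(x₁, y₂) - ⋯ - d(xₖ, yₖ) + d(xₖ, y₀)`; closing the chain
through `(x₀, y₀)` bounds it below. An infimum of `1`-Lipschitz functions is `1`-Lipschitz, and
prepending a support pair `(x, y)` to the chains shows `u y ≤ u x - d(x, y)`.
-/

section CyclicalMonotonicity

variable {α β : Type*}

def IsCyclicallyMonotone (c : α → β → ℝ) (S : Set (α × β)) : Prop :=
  ∀ l : List (α × β), (∀ p ∈ l, p ∈ S) →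
    (l.map fun p => c p.1 p.2).sum ≤ (List.zipWith (fun p q => c p.1 q.2) l (l.rotate 1)).sum

theorem IsCyclicallyMonotone.of_sum_le_sum_perm {c : α → β → ℝ} {S : Set (α × β)}
    (h : ∀ (n : ℕ) (f : Fin n → α × β), (∀ i, f i ∈ S) → ∀ e : Equiv.Perm (Fin n),
      ∑ i, c (f i).1 (f i).2 ≤ ∑ i, c (f i).1 (f (e i)).2) :
    IsCyclicallyMonotone c S := by
  intro l hl
  have hrot : List.zipWith (fun p q => c p.1 q.2) l (l.rotate 1)
      = List.ofFn fun i : Fin l.length => c l[i].1 l[finRotate _ i].2 := by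
    refine List.ext_getElem (by simp) fun k hk _ => ?_
    have : NeZero l.length := ⟨by simp at hk; omega⟩
    simp only [List.getElem_zipWith, List.getElem_rotate, List.getElem_ofFn, finRotate_apply,
      Fin.getElem_fin, Fin.val_add, Fin.val_one', Nat.add_mod_mod]
  rw [hrot, List.sum_ofFn, ← List.ofFn_getElem_eq_map, List.sum_ofFn]
  exact h _ (fun i => l[i]) (fun i => hl _ (List.getElem_mem _)) _

end CyclicalMonotonicity

section Rockafellar

variable {X : Type*} [PseudoMetricSpace X]

noncomputable def chainCost : X → List (X × X) → X → ℝ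
  | x, [], y => dist x y
  | x, p :: l, y => dist x p.2 - dist p.1 p.2 + chainCost p.1 l y

theorem chainCost_le_add_dist (l : List (X × X)) (x x' y : X) :
    chainCost x l y ≤ chainCost x' l y + dist x x' := by
  cases l with
  | nil => simp only [chainCost]; linarith [dist_triangle x x' y]
  | cons p l => simp only [chainCost]; linarith [dist_triangle x x' p.2]

theorem sum_zipWith_dist_cons_append (q r : X × X) (l : List (X × X)) :
    (List.zipWith (fun p q => dist p.1 q.2) (q :: l) (l ++ [r])).sum
      = chainCost q.1 l r.2 + (l.map fun p => dist p.1 p.2).sum := by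
  induction l generalizing q with
  | nil => simp [chainCost]
  | cons p l ih =>
    simp only [List.cons_append, List.zipWith_cons_cons, List.sum_cons, ih, chainCost,
      List.map_cons]
    ring

variable {S : Set (X × X)}

theorem IsCyclicallyMonotone.dist_le_chainCost (hS : IsCyclicallyMonotone dist S) {p : X × X}
    (hp : p ∈ S) {l : List (X × X)} (hl : ∀ q ∈ l, q ∈ S) :
    dist p.1 p.2 ≤ chainCost p.1 l p.2 := by
  have := hS (p :: l) (by simpa [hp] using hl)
  simp only [List.map_cons, List.sum_cons, List.rotate_cons_succ, List.rotate_zero,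
    sum_zipWith_dist_cons_append] at this
  linarith

noncomputable def chainPotential (S : Set (X × X)) (y x : X) : ℝ :=
  ⨅ l : {l : List (X × X) // ∀ q ∈ l, q ∈ S}, chainCost x l y

theorem IsCyclicallyMonotone.bddBelow_chainCost (hS : IsCyclicallyMonotone dist S) {p : X × X}
    (hp : p ∈ S) (x : X) :
    BddBelow (range fun l : {l : List (X × X) // ∀ q ∈ l, q ∈ S} => chainCost x l p.2) := by
  refine ⟨-dist p.1 x, ?_⟩
  rintro _ ⟨l, rfl⟩
  linarith [hS.dist_le_chainCost hp l.2, chainCost_le_add_dist l.1 p.1 x p.2,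
    dist_nonneg (x := p.1) (y := p.2)]

theorem IsCyclicallyMonotone.exists_lipschitzWith_one (hS : IsCyclicallyMonotone dist S) :
    ∃ u : X → ℝ, LipschitzWith 1 u ∧ ∀ p ∈ S, u p.1 - u p.2 = dist p.1 p.2 := by
  rcases S.eq_empty_or_nonempty with rfl | ⟨p₀, hp₀⟩
  · exact ⟨0, (LipschitzWith.const' 0).weaken zero_le_one, by simp⟩
  have : Nonempty {l : List (X × X) // ∀ q ∈ l, q ∈ S} := ⟨⟨[], by simp⟩⟩
  set u := chainPotential S p₀.2
  have hbdd := hS.bddBelow_chainCost hp₀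
  have hle : ∀ x x', u x ≤ u x' + dist x x' := fun x x' => by
    rw [← sub_le_iff_le_add]
    refine le_ciInf fun l => ?_
    rw [sub_le_iff_le_add]
    exact (ciInf_le (hbdd x) l).trans (chainCost_le_add_dist l.1 x x' p₀.2)
  have hge : ∀ p ∈ S, u p.2 + dist p.1 p.2 ≤ u p.1 := fun p hp => le_ciInf fun l => by
    have hpl : ∀ q ∈ p :: l.1, q ∈ S := by simpa [hp] using l.2
    have : u p.2 ≤ chainCost p.2 (p :: l.1) p₀.2 := ciInf_le (hbdd p.2) ⟨_, hpl⟩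
    simp only [chainCost, dist_self] at this
    linarith
  refine ⟨u, .of_le_add hle, fun p hp => le_antisymm ?_ ?_⟩
  · linarith [hle p.1 p.2, dist_comm p.1 p.2]
  · linarith [hge p hp]

end Rockafellar

section OptimalPlan

variable {α β : Type*} [MeasurableSpace α] [MeasurableSpace β]

theorem MeasureTheory.Measure.map_sub_add_of_map_eq {μ ν ρ : Measure α} [IsFiniteMeasure ν]
    (hν : ν ≤ μ) {g : α → β} (hg : Measurable g) (h : ρ.map g = ν.map g) :
    (μ - ν + ρ).map g = μ.map g := by
  rw [Measure.map_add _ _ hg, h, ← Measure.map_add _ _ hg, Measure.sub_add_cancel_of_le hν]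

theorem MeasureTheory.Measure.smul_sum_cond_le {ι : Type*} [Fintype ι] (μ : Measure α)
    (B : ι → Set α) : (∑ i, (μ (B i))⁻¹)⁻¹ • ∑ i, μ[|B i] ≤ μ := by
  refine Measure.le_iff'.2 fun s => ?_
  have hcond : ∀ i, μ[|B i] s ≤ (μ (B i))⁻¹ * μ s := fun i => by
    rw [ProbabilityTheory.cond, Measure.smul_apply, smul_eq_mul]
    gcongr
    exact Measure.restrict_le_self
  calc ((∑ i, (μ (B i))⁻¹)⁻¹ • ∑ i, μ[|B i]) s
      ≤ (∑ i, (μ (B i))⁻¹)⁻¹ * ((∑ i, (μ (B i))⁻¹) * μ s) := by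
        rw [Measure.smul_apply, smul_eq_mul, Measure.coe_finsetSum, Finset.sum_apply,
          Finset.sum_mul]
        gcongr with i
        exact hcond i
    _ ≤ μ s := by rw [← mul_assoc]; exact mul_le_of_le_one_left' (ENNReal.inv_mul_le_one _)

def IsOptimalPlan (c : α × β → ℝ≥0∞) (π : Measure (α × β)) : Prop :=
  ∀ π' : Measure (α × β), π'.map Prod.fst = π.map Prod.fst → π'.map Prod.snd = π.map Prod.snd →
    ∫⁻ p, c p ∂π ≤ ∫⁻ p, c p ∂π'

variable {c : α × β → ℝ≥0∞} {π : Measure (α × β)}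

theorem IsOptimalPlan.lintegral_le_of_le {σ τ : Measure (α × β)} (hπ : IsOptimalPlan c π)
    (hfin : ∫⁻ p, c p ∂π ≠ ∞) [IsFiniteMeasure σ] (hσ : σ ≤ π)
    (hτ₁ : τ.map Prod.fst = σ.map Prod.fst) (hτ₂ : τ.map Prod.snd = σ.map Prod.snd) :
    ∫⁻ p, c p ∂σ ≤ ∫⁻ p, c p ∂τ := by
  have hopt := hπ (π - σ + τ) (Measure.map_sub_add_of_map_eq hσ measurable_fst hτ₁)
    (Measure.map_sub_add_of_map_eq hσ measurable_snd hτ₂)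
  have hsplit : ∫⁻ p, c p ∂π = ∫⁻ p, c p ∂(π - σ) + ∫⁻ p, c p ∂σ := by
    conv_lhs => rw [← Measure.sub_add_cancel_of_le hσ]
    exact lintegral_add_measure _ _ _
  rw [hsplit, lintegral_add_measure] at hopt
  rw [hsplit] at hfin
  exact (ENNReal.add_le_add_iff_left (ENNReal.add_ne_top.1 hfin).1).1 hopt

theorem IsOptimalPlan.sum_lintegral_cond_le [IsFiniteMeasure π] (hπ : IsOptimalPlan c π)
    (hfin : ∫⁻ p, c p ∂π ≠ ∞) {ι : Type*} [Fintype ι] {B : ι → Set (α × β)}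
    (hB : ∀ i, π (B i) ≠ 0) (e : Equiv.Perm ι) :
    ∑ i, ∫⁻ p, c p ∂π[|B i] ≤
      ∑ i, ∫⁻ p, c p ∂((π[|B i]).map Prod.fst).prod ((π[|B (e i)]).map Prod.snd) := by
  rcases isEmpty_or_nonempty ι with hι | hι
  · simp
  have := fun i => cond_isProbabilityMeasure (hB i)
  have := fun i => Measure.isProbabilityMeasure_map (μ := π[|B i]) measurable_fst.aemeasurable
  have := fun i => Measure.isProbabilityMeasure_map (μ := π[|B i]) measurable_snd.aemeasurable
  have hσ := Measure.smul_sum_cond_le π B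
  set κ := (∑ i, (π (B i))⁻¹)⁻¹
  have hκ0 : κ ≠ 0 := ENNReal.inv_ne_zero.2 <| ENNReal.sum_ne_top.2 fun i _ => by simpa using hB i
  have hκtop : κ ≠ ∞ := ENNReal.inv_ne_top.2 <| by simp [measure_ne_top]
  have : IsFiniteMeasure (κ • ∑ i, π[|B i]) := isFiniteMeasure_of_le π hσ
  have key := hπ.lintegral_le_of_le hfin hσ
    (τ := κ • ∑ i, ((π[|B i]).map Prod.fst).prod ((π[|B (e i)]).map Prod.snd)) ?_ ?_
  · simp only [lintegral_smul_measure, lintegral_finsetSum_measure, smul_eq_mul] at key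
    exact (ENNReal.mul_le_mul_iff_right hκ0 hκtop).1 key
  · simp only [Measure.map_smul, Measure.map_finset_sum measurable_fst.aemeasurable,
      Measure.map_fst_prod, measure_univ, one_smul]
  · simp only [Measure.map_smul, Measure.map_finset_sum measurable_snd.aemeasurable,
      Measure.map_snd_prod, measure_univ, one_smul]
    rw [Equiv.sum_comp e fun i => (π[|B i]).map Prod.snd]

end OptimalPlan

section EdistCost

variable {X : Type*} [PseudoEMetricSpace X] [MeasurableSpace X]

theorem edist_le_lintegral_edist_add {P : Measure (X × X)} [IsProbabilityMeasure P]
    {a : X × X} {ε : ℝ≥0∞} (h : ∀ᵐ p ∂P, edist p a < ε) :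
    edist a.1 a.2 ≤ ∫⁻ p, edist p.1 p.2 ∂P + 2 * ε := by
  have hpt : ∀ᵐ p ∂P, edist a.1 a.2 ≤ edist p.1 p.2 + 2 * ε := h.mono fun p hp => by
    rw [Prod.edist_eq, max_lt_iff] at hp
    calc edist a.1 a.2 ≤ edist a.1 p.1 + edist p.1 p.2 + edist p.2 a.2 := edist_triangle4 ..
      _ ≤ ε + edist p.1 p.2 + ε := by rw [edist_comm a.1]; gcongr; exacts [hp.1.le, hp.2.le]
      _ = edist p.1 p.2 + 2 * ε := by ring
  calc edist a.1 a.2 = ∫⁻ _, edist a.1 a.2 ∂P := by simp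
    _ ≤ ∫⁻ p, (edist p.1 p.2 + 2 * ε) ∂P := lintegral_mono_ae hpt
    _ = ∫⁻ p, edist p.1 p.2 ∂P + 2 * ε := by rw [lintegral_add_right _ measurable_const]; simp

theorem lintegral_edist_prod_le {P Q : Measure X} [IsProbabilityMeasure P]
    [IsProbabilityMeasure Q] {x y : X} {ε : ℝ≥0∞} (hP : ∀ᵐ x' ∂P, edist x' x < ε)
    (hQ : ∀ᵐ y' ∂Q, edist y' y < ε) :
    ∫⁻ p, edist p.1 p.2 ∂P.prod Q ≤ edist x y + 2 * ε := by
  have hpt : ∀ᵐ p ∂P.prod Q, edist p.1 p.2 ≤ edist x y + 2 * ε := by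
    filter_upwards [Measure.quasiMeasurePreserving_fst.ae hP,
      Measure.quasiMeasurePreserving_snd.ae hQ] with p hp₁ hp₂
    calc edist p.1 p.2 ≤ edist p.1 x + edist x y + edist y p.2 := edist_triangle4 ..
      _ ≤ ε + edist x y + ε := by rw [edist_comm y]; gcongr
      _ = edist x y + 2 * ε := by ring
  calc ∫⁻ p, edist p.1 p.2 ∂P.prod Q ≤ ∫⁻ _, (edist x y + 2 * ε) ∂P.prod Q :=
        lintegral_mono_ae hpt
    _ = edist x y + 2 * ε := by simp

end EdistCost

section Support

open scoped Topology

variable {X : Type*} [MeasurableSpace X] {π : Measure (X × X)} [IsFiniteMeasure π]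

theorem IsOptimalPlan.sum_edist_le_sum_edist_perm_add [PseudoEMetricSpace X]
    [OpensMeasurableSpace X] [SecondCountableTopology X] (hπ : IsOptimalPlan (fun p => edist p.1 p.2) π) (hfin : ∫⁻ p, edist p.1 p.2 ∂π ≠ ∞)
    {ι : Type*} [Fintype ι] {f : ι → X × X} (hf : ∀ i, f i ∈ msupport π) (e : Equiv.Perm ι)
    {ε : ℝ≥0∞} (hε : 0 < ε) :
    ∑ i, edist (f i).1 (f i).2 ≤ ∑ i, (edist (f i).1 (f (e i)).2 + 4 * ε) := by
  set B : ι → Set (X × X) := fun i => eball (f i) ε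
  have hB : ∀ i, π (B i) ≠ 0 := fun i => (hf i _ isOpen_eball (mem_eball_self hε)).ne'
  have := fun i => cond_isProbabilityMeasure (hB i)
  have := fun i => Measure.isProbabilityMeasure_map (μ := π[|B i]) measurable_fst.aemeasurable
  have := fun i => Measure.isProbabilityMeasure_map (μ := π[|B i]) measurable_snd.aemeasurable
  have hmem : ∀ i, ∀ᵐ p ∂π[|B i], edist p (f i) < ε := fun i =>
    ae_cond_mem isOpen_eball.measurableSet
  have hfst : ∀ i, ∀ᵐ x ∂(π[|B i]).map Prod.fst, edist x (f i).1 < ε := fun i =>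
    (ae_map_iff measurable_fst.aemeasurable isOpen_eball.measurableSet).2 <|
      (hmem i).mono fun p hp => (le_max_left _ _).trans_lt ((Prod.edist_eq _ _).symm.trans_lt hp)
  have hsnd : ∀ i, ∀ᵐ y ∂(π[|B i]).map Prod.snd, edist y (f i).2 < ε := fun i =>
    (ae_map_iff measurable_snd.aemeasurable isOpen_eball.measurableSet).2 <|
      (hmem i).mono fun p hp => (le_max_right _ _).trans_lt ((Prod.edist_eq _ _).symm.trans_lt hp)
  calc ∑ i, edist (f i).1 (f i).2 ≤ ∑ i, (∫⁻ p, edist p.1 p.2 ∂π[|B i] + 2 * ε) :=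
        Finset.sum_le_sum fun i _ => edist_le_lintegral_edist_add (hmem i)
    _ = ∑ i, ∫⁻ p, edist p.1 p.2 ∂π[|B i] + ∑ _i : ι, 2 * ε := Finset.sum_add_distrib
    _ ≤ ∑ i, ∫⁻ p, edist p.1 p.2 ∂((π[|B i]).map Prod.fst).prod ((π[|B (e i)]).map Prod.snd)
          + ∑ _i : ι, 2 * ε := add_le_add_left (hπ.sum_lintegral_cond_le hfin hB e) _
    _ ≤ ∑ i, (edist (f i).1 (f (e i)).2 + 2 * ε) + ∑ _i : ι, 2 * ε := by
        gcongr with i; exact lintegral_edist_prod_le (hfst i) (hsnd (e i))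
    _ = ∑ i, (edist (f i).1 (f (e i)).2 + 4 * ε) := by
        rw [← Finset.sum_add_distrib]; congr! 1 with i; ring

theorem IsOptimalPlan.isCyclicallyMonotone_msupport [PseudoMetricSpace X]
    [OpensMeasurableSpace X] [SecondCountableTopology X] (hπ : IsOptimalPlan (fun p => edist p.1 p.2) π) (hfin : ∫⁻ p, edist p.1 p.2 ∂π ≠ ∞) :
    IsCyclicallyMonotone dist (msupport π) := by
  refine .of_sum_le_sum_perm fun n f hf e => ?_
  have hlim : Tendsto (fun ε => ∑ i, (edist (f i).1 (f (e i)).2 + 4 * ε)) (𝓝[>] 0)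
      (𝓝 (∑ i, (edist (f i).1 (f (e i)).2 + 4 * 0))) :=
    tendsto_nhdsWithin_of_tendsto_nhds <| Continuous.tendsto (continuous_finsetSum _ fun _ _ =>
      continuous_const.add (ENNReal.continuous_const_mul (by norm_num))) 0
  have hle := ge_of_tendsto hlim (eventually_nhdsWithin_of_forall fun ε hε =>
    hπ.sum_edist_le_sum_edist_perm_add hfin hf e hε)
  simp only [mul_zero, add_zero, edist_dist] at hle
  rwa [← ENNReal.ofReal_sum_of_nonneg fun _ _ => dist_nonneg,
    ← ENNReal.ofReal_sum_of_nonneg fun _ _ => dist_nonneg,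
    ENNReal.ofReal_le_ofReal_iff (Finset.sum_nonneg fun _ _ => dist_nonneg)] at hle

end Support

theorem exists_kantorovich_potential_general
    {X : Type*} [MetricSpace X] [PolishSpace X] [MeasurableSpace X] [BorelSpace X]
    (μ ν : Measure X) [IsProbabilityMeasure μ]
    (π : Measure (X × X))
    (hπ₁ : Measure.map Prod.fst π = μ) (hπ₂ : Measure.map Prod.snd π = ν)
    (hopt : ∀ π' : Measure (X × X), Measure.map Prod.fst π' = μ →
      Measure.map Prod.snd π' = ν → ∫⁻ p, edist p.1 p.2 ∂π ≤ ∫⁻ p, edist p.1 p.2 ∂π')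
    (hfin : ∫⁻ p, edist p.1 p.2 ∂π ≠ ⊤) :
    ∃ u : X → ℝ, AEMeasurable u μ ∧ LipschitzWith 1 u ∧
      (∀ p ∈ msupport π, u p.1 - u p.2 = dist p.1 p.2) ∧
      ∀ x y : X, u x - u y ≤ dist x y := by
  have : IsProbabilityMeasure (π.map Prod.fst) := hπ₁ ▸ ‹_›
  have := Measure.isProbabilityMeasure_of_map (μ := π) Prod.fst
  have hπ : IsOptimalPlan (fun p => edist p.1 p.2) π := fun π' h₁ h₂ =>
    hopt π' (h₁.trans hπ₁) (h₂.trans hπ₂)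
  obtain ⟨u, hu, hS⟩ := (hπ.isCyclicallyMonotone_msupport hfin).exists_lipschitzWith_one
  refine ⟨u, hu.continuous.measurable.aemeasurable, hu, hS, fun x y => ?_⟩
  exact sub_le_iff_le_add'.2 (by simpa using hu.le_add_mul x y)

/-- Existence of a Kantorovich potential for the distance cost: if `π` is an optimal coupling
between `μ` and `ν` for the cost `c = d` with finite optimal cost, there is a `μ`-measurable
`1`-Lipschitz map `u` with `u x - u y = d x y` on the support of `π` and `u x - u y ≤ d x y`
everywhere. -/
theorem exists_kantorovich_potential
    {X : Type*} [MetricSpace X] [PolishSpace X] [MeasurableSpace X] [BorelSpace X]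
    (μ ν : Measure X) [IsProbabilityMeasure μ] [IsProbabilityMeasure ν]
    (π : Measure (X × X))
    (hπ₁ : Measure.map Prod.fst π = μ) (hπ₂ : Measure.map Prod.snd π = ν)
    (hopt : ∀ π' : Measure (X × X), Measure.map Prod.fst π' = μ →
      Measure.map Prod.snd π' = ν → ∫⁻ p, edist p.1 p.2 ∂π ≤ ∫⁻ p, edist p.1 p.2 ∂π')
    (hfin : ∫⁻ p, edist p.1 p.2 ∂π ≠ ⊤) :
    ∃ u : X → ℝ, AEMeasurable u μ ∧ LipschitzWith 1 u ∧
      (∀ p ∈ msupport π, u p.1 - u p.2 = dist p.1 p.2) ∧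
      ∀ x y : X, u x - u y ≤ dist x y :=
  exists_kantorovich_potential_general μ ν π hπ₁ hπ₂ hopt hfin
end

section
/- Let ρ₀, ρ₁ be Borel probability measures on H with W₁(ρ₀,ρ₁) < ∞, and for each ε > 0 let Π_ε ∈ C(ρ₀,ρ₁) minimize Π ↦ ∫(|x−y| + ε α(x−y)) dΠ over C(ρ₀,ρ₁). Then every weak limit point Π of (Π_ε) as ε → 0 belongs to O₂(ρ₀,ρ₁): Π is optimal for ∫|x−y|dΠ over C(ρ₀,ρ₁), and ∫α(x−y) dΠ ≤ ∫α(x−y) dΠ₀ for every Π₀ ∈ O₁(ρ₀,ρ₁). -/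
/-!
`Π_ε` minimizes `cost1 + ε cost2` over couplings. Comparing it with a coupling `Π'` gives
`cost1 Π_ε ≤ cost1 Π' + ε cost2 Π'`, and, when `Π' ∈ O₁` (so that `cost1 Π' ≤ cost1 Π_ε`),
`cost2 Π_ε ≤ cost2 Π'`. Both costs integrate nonnegative continuous functions, so by the
portmanteau theorem they are lower semicontinuous under weak convergence, and the marginal
constraints pass to weak limits; letting `ε → 0` gives both claims.
-/

open MeasureTheory ProbabilityTheory Filter Metric Set
open scoped ENNReal NNReal

lemma ENNReal.tendsto_add_ofReal_mul {ι : Type*} {l : Filter ι} {ε : ι → ℝ}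
    (hε : Tendsto ε l (nhds 0)) (a : ℝ≥0∞) {c : ℝ≥0∞} (hc : c ≠ ⊤) :
    Tendsto (fun i => a + ENNReal.ofReal (ε i) * c) l (nhds a) := by
  have h0 : Tendsto (fun i => ENNReal.ofReal (ε i)) l (nhds 0) :=
    ENNReal.ofReal_zero ▸ (ENNReal.continuous_ofReal.tendsto 0).comp hε
  simpa using tendsto_const_nhds.add (ENNReal.Tendsto.mul_const h0 (Or.inr hc))

namespace WeakLimit

variable {X : Type*} [MeasurableSpace X] [TopologicalSpace X] {μs : ℕ → Measure X}
  {μ : Measure X} [∀ n, IsProbabilityMeasure (μs n)]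

lemma isProbabilityMeasure (h : WeakLimit μs μ) : IsProbabilityMeasure μ := by
  have hone : Tendsto (fun n => ∫ x, (1 : BoundedContinuousFunction X ℝ) x ∂(μs n)) atTop
      (nhds 1) := by simp
  have hμ : μ.real univ = 1 := by simpa using tendsto_nhds_unique (h 1) hone
  exact ⟨(ENNReal.toReal_eq_one_iff _).mp hμ⟩

variable [OpensMeasurableSpace X] [IsProbabilityMeasure μ]

lemma tendsto_probabilityMeasure (h : WeakLimit μs μ) :
    Tendsto (β := ProbabilityMeasure X) (fun n => ⟨μs n, inferInstance⟩) atTop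
      (nhds ⟨μ, inferInstance⟩) :=
  ProbabilityMeasure.tendsto_iff_forall_integral_tendsto.mpr h

lemma lintegral_le_liminf [HasOuterApproxClosed X] (h : WeakLimit μs μ) {f : X → ℝ}
    (hf : Continuous f) (hf0 : 0 ≤ f) :
    ∫⁻ x, ENNReal.ofReal (f x) ∂μ ≤ atTop.liminf fun n => ∫⁻ x, ENNReal.ofReal (f x) ∂(μs n) :=
  lintegral_le_liminf_lintegral_of_forall_isOpen_measure_le_liminf_measure hf hf0 fun _ hG =>
    ProbabilityMeasure.le_liminf_measure_open_of_tendsto h.tendsto_probabilityMeasure hG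

lemma map_eq {Y : Type*} [MeasurableSpace Y] [TopologicalSpace Y] [BorelSpace Y]
    [HasOuterApproxClosed Y] {f : X → Y} (hf : Continuous f) {ν : Measure Y}
    [IsProbabilityMeasure ν] (hμs : ∀ n, (μs n).map f = ν) (h : WeakLimit μs μ) :
    μ.map f = ν := by
  have hlim := ProbabilityMeasure.tendsto_map_of_tendsto_of_continuous _ _
    h.tendsto_probabilityMeasure hf
  have hconst n : ProbabilityMeasure.map ⟨μs n, inferInstance⟩ hf.measurable.aemeasurable =
      (⟨ν, inferInstance⟩ : ProbabilityMeasure Y) :=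
    Subtype.ext (hμs n)
  exact congrArg Subtype.val
    (tendsto_nhds_unique (X := ProbabilityMeasure Y) (hlim.congr hconst) tendsto_const_nhds)

end WeakLimit

section Coupling

variable {H : Type*} [MeasurableSpace H] {ρ₀ ρ₁ : Measure H}

lemma isProbabilityMeasure_of_mem_coupling_s16 [IsProbabilityMeasure ρ₀] {σ : Measure (H × H)}
    (h : σ ∈ Coupling ρ₀ ρ₁) : IsProbabilityMeasure σ := by
  refine ⟨?_⟩
  rw [← preimage_univ (f := Prod.fst), ← Measure.map_apply measurable_fst MeasurableSet.univ,
    h.1, measure_univ]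

lemma WeakLimit.mem_coupling [TopologicalSpace H] [TopologicalSpace.PseudoMetrizableSpace H]
    [SecondCountableTopology H] [BorelSpace H] [IsProbabilityMeasure ρ₀]
    [IsProbabilityMeasure ρ₁] {μs : ℕ → Measure (H × H)} {μ : Measure (H × H)}
    [∀ n, IsProbabilityMeasure (μs n)] [IsProbabilityMeasure μ]
    (hμs : ∀ n, μs n ∈ Coupling ρ₀ ρ₁) (h : WeakLimit μs μ) : μ ∈ Coupling ρ₀ ρ₁ :=
  ⟨h.map_eq continuous_fst fun n => (hμs n).1, h.map_eq continuous_snd fun n => (hμs n).2⟩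

end Coupling

section Cost

variable {H : Type*} [NormedAddCommGroup H]

lemma alphaCost_nonneg (z : H) : 0 ≤ alphaCost z := Real.sqrt_nonneg _

lemma norm_le_alphaCost (z : H) : ‖z‖ ≤ alphaCost z :=
  Real.le_sqrt_of_sq_le (by linarith)

lemma alphaCost_le_one_add_norm (z : H) : alphaCost z ≤ 1 + ‖z‖ :=
  Real.sqrt_le_iff.mpr ⟨by positivity, by nlinarith [norm_nonneg z]⟩

lemma continuous_alphaCost : Continuous (alphaCost : H → ℝ) :=
  Real.continuous_sqrt.comp (by fun_prop)

variable [MeasurableSpace H]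

lemma cost1_le_cost2 (σ : Measure (H × H)) : cost1 σ ≤ cost2 σ :=
  lintegral_mono fun _ => ENNReal.ofReal_le_ofReal (norm_le_alphaCost _)

lemma cost2_ne_top {σ : Measure (H × H)} [IsFiniteMeasure σ] (h : cost1 σ ≠ ⊤) :
    cost2 σ ≠ ⊤ := by
  refine ne_top_of_le_ne_top (ENNReal.add_ne_top.mpr ⟨measure_ne_top σ univ, h⟩) ?_
  calc cost2 σ ≤ ∫⁻ p, 1 + ENNReal.ofReal ‖p.1 - p.2‖ ∂σ :=
        lintegral_mono fun p => by
          rw [← ENNReal.ofReal_one, ← ENNReal.ofReal_add zero_le_one (norm_nonneg _)]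
          exact ENNReal.ofReal_le_ofReal (alphaCost_le_one_add_norm _)
    _ = σ univ + cost1 σ := by rw [lintegral_add_left measurable_const, lintegral_one]; rfl

variable [OpensMeasurableSpace H] [SecondCountableTopology H]

lemma costEps_eq_cost1_add {ε : ℝ} (hε : 0 ≤ ε) (σ : Measure (H × H)) :
    costEps ε σ = cost1 σ + ENNReal.ofReal ε * cost2 σ := by
  have hα : Measurable fun p : H × H => ENNReal.ofReal (alphaCost (p.1 - p.2)) :=
    ENNReal.measurable_ofReal.comp (continuous_alphaCost.comp (by fun_prop)).measurable
  rw [cost1, cost2, ← lintegral_const_mul _ hα, ← lintegral_add_right _ (hα.const_mul _)]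
  refine lintegral_congr fun p => ?_
  rw [ENNReal.ofReal_add (norm_nonneg _) (mul_nonneg hε (alphaCost_nonneg _)),
    ENNReal.ofReal_mul hε]

variable {ρ₀ ρ₁ : Measure H} {ε : ℝ} {σ π' : Measure (H × H)}

lemma cost1_le_of_isMinOn_costEps (hε : 0 ≤ ε) (hσ : IsMinOn (costEps ε) (Coupling ρ₀ ρ₁) σ)
    (hπ' : π' ∈ Coupling ρ₀ ρ₁) : cost1 σ ≤ cost1 π' + ENNReal.ofReal ε * cost2 π' :=
  calc cost1 σ ≤ costEps ε σ := (costEps_eq_cost1_add hε σ).symm ▸ le_self_add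
    _ ≤ costEps ε π' := isMinOn_iff.mp hσ π' hπ'
    _ = _ := costEps_eq_cost1_add hε π'

lemma cost2_le_of_isMinOn_costEps (hε : 0 < ε) (hσ : IsMinOn (costEps ε) (Coupling ρ₀ ρ₁) σ)
    (hσc : σ ∈ Coupling ρ₀ ρ₁) (hπ' : π' ∈ O1 ρ₀ ρ₁) : cost2 σ ≤ cost2 π' := by
  rcases eq_or_ne (cost2 π') ⊤ with h | h
  · exact h ▸ le_top
  have key : cost1 π' + ENNReal.ofReal ε * cost2 σ ≤ cost1 π' + ENNReal.ofReal ε * cost2 π' :=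
    calc _ ≤ cost1 σ + ENNReal.ofReal ε * cost2 σ := add_le_add_left (hπ'.2 σ hσc) _
      _ = costEps ε σ := (costEps_eq_cost1_add hε.le σ).symm
      _ ≤ costEps ε π' := isMinOn_iff.mp hσ π' hπ'.1
      _ = _ := costEps_eq_cost1_add hε.le π'
  exact (ENNReal.mul_le_mul_iff_right (ENNReal.ofReal_pos.mpr hε).ne' ENNReal.ofReal_ne_top).mp
    (ENNReal.le_of_add_le_add_left (ne_top_of_le_ne_top h (cost1_le_cost2 π')) key)

end Cost

variable {H : Type*} [NormedAddCommGroup H] [InnerProductSpace ℝ H] [CompleteSpace H]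
  [TopologicalSpace.SeparableSpace H] [MeasurableSpace H] [BorelSpace H]

theorem weak_limit_in_O2_general
    (ρ₀ ρ₁ : Measure H) [IsProbabilityMeasure ρ₀] [IsProbabilityMeasure ρ₁]
    (πe : ℝ → Measure (H × H))
    (hcpl : ∀ ε > (0 : ℝ), πe ε ∈ Coupling ρ₀ ρ₁)
    (hopt : ∀ ε > (0 : ℝ), ∀ π' ∈ Coupling ρ₀ ρ₁, costEps ε (πe ε) ≤ costEps ε π')
    (π : Measure (H × H)) (ε : ℕ → ℝ) (hεpos : ∀ n, 0 < ε n)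
    (hε0 : Tendsto ε atTop (nhds 0))
    (hlim : WeakLimit (fun n => πe (ε n)) π) :
    π ∈ O1 ρ₀ ρ₁ ∧ ∀ π' ∈ O1 ρ₀ ρ₁, cost2 π ≤ cost2 π' := by
  have hprob n : IsProbabilityMeasure (πe (ε n)) :=
    isProbabilityMeasure_of_mem_coupling_s16 (hcpl _ (hεpos n))
  have hmin n : IsMinOn (costEps (ε n)) (Coupling ρ₀ ρ₁) (πe (ε n)) :=
    isMinOn_iff.mpr (hopt _ (hεpos n))
  have := hlim.isProbabilityMeasure
  have hO1 : π ∈ O1 ρ₀ ρ₁ := by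
    refine ⟨hlim.mem_coupling fun n => hcpl _ (hεpos n), fun π' hπ' => ?_⟩
    have := isProbabilityMeasure_of_mem_coupling_s16 hπ'
    rcases eq_or_ne (cost1 π') ⊤ with h | h
    · exact h ▸ le_top
    calc cost1 π ≤ atTop.liminf fun n => cost1 (πe (ε n)) :=
          hlim.lintegral_le_liminf (by fun_prop) fun _ => norm_nonneg _
      _ ≤ atTop.liminf fun n => cost1 π' + ENNReal.ofReal (ε n) * cost2 π' :=
          liminf_le_liminf (.of_forall fun n =>
            cost1_le_of_isMinOn_costEps (hεpos n).le (hmin n) hπ')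
      _ = cost1 π' := (ENNReal.tendsto_add_ofReal_mul hε0 _ (cost2_ne_top h)).liminf_eq
  refine ⟨hO1, fun π' hπ' => ?_⟩
  calc cost2 π ≤ atTop.liminf fun n => cost2 (πe (ε n)) :=
        hlim.lintegral_le_liminf (continuous_alphaCost.comp (by fun_prop))
          fun _ => alphaCost_nonneg _
    _ ≤ atTop.liminf fun _ => cost2 π' :=
        liminf_le_liminf (.of_forall fun n =>
          cost2_le_of_isMinOn_costEps (hεpos n) (hmin n) (hcpl _ (hεpos n)) hπ')
    _ = cost2 π' := liminf_const _

/-- A weak limit point of minimizers of the perturbed problems `(P_ε)` as `ε → 0` belongs to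
`O₂(ρ₀,ρ₁)`. -/
theorem weak_limit_in_O2
    (hinf : ¬ FiniteDimensional ℝ H)
    (ρ₀ ρ₁ : Measure H) [IsProbabilityMeasure ρ₀] [IsProbabilityMeasure ρ₁]
    (hW : W1 ρ₀ ρ₁ ≠ ⊤)
    (πe : ℝ → Measure (H × H))
    (hcpl : ∀ ε > (0 : ℝ), πe ε ∈ Coupling ρ₀ ρ₁)
    (hopt : ∀ ε > (0 : ℝ), ∀ π' ∈ Coupling ρ₀ ρ₁, costEps ε (πe ε) ≤ costEps ε π')
    (π : Measure (H × H)) (ε : ℕ → ℝ) (hεpos : ∀ n, 0 < ε n)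
    (hε0 : Tendsto ε atTop (nhds 0))
    (hlim : WeakLimit (fun n => πe (ε n)) π) :
    π ∈ O1 ρ₀ ρ₁ ∧ ∀ π' ∈ O1 ρ₀ ρ₁, cost2 π ≤ cost2 π' :=
  weak_limit_in_O2_general ρ₀ ρ₁ πe hcpl hopt π ε hεpos hε0 hlim
end

section
/- Let H be a real Hilbert space and α(z) := √(1+|z|²), which is convex and differentiable on H with gradient ∇α. If x, x', y, y' ∈ H satisfy α(y−x) + α(y'−x') ≤ α(y'−x) + α(y−x'), then ⟨∇α(y−x') − ∇α(y'−x), x−x'⟩ ≥ 0. -/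
open MeasureTheory ProbabilityTheory Filter Metric Set
open scoped ENNReal NNReal

/-! `α(z)` is the norm of `(1, z)` in the Hilbert sum `ℝ ⊕ H`, so Cauchy–Schwarz gives
`1 + ⟪a, b⟫ ≤ α(a) α(b)`; divided by `α(a)` this is the first-order convexity inequality
`α(a) + ⟪∇α(a), b - a⟫ ≤ α(b)`. Adding it at `y - x'` and at `y' - x` and comparing with the
hypothesis gives the monotonicity of `∇α`. -/

section AlphaCost

variable {H : Type*} [NormedAddCommGroup H]

lemma alphaCost_pos (a : H) : 0 < alphaCost a := by
  unfold alphaCost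
  positivity

lemma alphaCost_sq (a : H) : alphaCost a ^ 2 = 1 + ‖a‖ ^ 2 :=
  Real.sq_sqrt (by positivity)

variable [InnerProductSpace ℝ H]

lemma one_add_inner_le_alphaCost_mul (a b : H) :
    1 + inner ℝ a b ≤ alphaCost a * alphaCost b := by
  have hprod : 1 + ‖a‖ * ‖b‖ ≤ alphaCost a * alphaCost b := by
    rw [alphaCost, alphaCost, ← Real.sqrt_mul (by positivity)]
    exact Real.le_sqrt_of_sq_le (by nlinarith [sq_nonneg (‖a‖ - ‖b‖)])
  linarith [real_inner_le_norm a b]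

lemma alphaCost_add_inner_gradAlpha_le (a b : H) :
    alphaCost a + inner ℝ (gradAlpha a) (b - a) ≤ alphaCost b := by
  have hα := alphaCost_pos a
  have hgrad : gradAlpha a = (alphaCost a)⁻¹ • a := rfl
  have hlhs : alphaCost a + inner ℝ (gradAlpha a) (b - a) = (1 + inner ℝ a b) / alphaCost a := by
    rw [hgrad, real_inner_smul_left, inner_sub_right, real_inner_self_eq_norm_sq]
    field_simp
    linarith [alphaCost_sq a]
  rw [hlhs, div_le_iff₀ hα, mul_comm]
  exact one_add_inner_le_alphaCost_mul a b

end AlphaCost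

/-- If `α(y-x) + α(y'-x') ≤ α(y'-x) + α(y-x')` (with `α(z) = √(1+|z|²)` and gradient
`∇α(z) = z/√(1+|z|²)`), then `⟪∇α(y-x') - ∇α(y'-x), x-x'⟫ ≥ 0`. -/
theorem gradAlpha_monotone {H : Type*} [NormedAddCommGroup H] [InnerProductSpace ℝ H]
    (x x' y y' : H)
    (h : alphaCost (y - x) + alphaCost (y' - x')
      ≤ alphaCost (y' - x) + alphaCost (y - x')) :
    0 ≤ (inner ℝ (gradAlpha (y - x') - gradAlpha (y' - x)) (x - x') : ℝ) := by
  have h₁ := alphaCost_add_inner_gradAlpha_le (y - x') (y - x)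
  have h₂ := alphaCost_add_inner_gradAlpha_le (y' - x) (y' - x')
  rw [show y - x - (y - x') = -(x - x') by abel, inner_neg_right] at h₁
  rw [show y' - x' - (y' - x) = x - x' by abel] at h₂
  rw [inner_sub_left]
  linarith
end
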